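/- arXiv:math/0012092 — 4 statements merged into one kernel-verified Lean document; each statement's English description precedes it below -/
import Mathlib

section
/- Let R be a UFD (in particular R₁ ⊗ R₂ with R₁ = ℂ[X₁,…,Xₙ] and R₂ = ℂ[T]_{(T)}), K₁ = ℂ(X₁,…,Xₙ), K₂ = ℂ(T). Let M be a torsion-free R-module such that K₁M is free of rank r over K₁ ⊗ R₂ and K₂M is free of rank r over R₁ ⊗ K₂. Then M is finitely generated as an R-module. -/
open TensorProduct

instance : (Ideal.span {(Polynomial.X : Polynomial ℂ)}).IsPrime :=
  (Ideal.span_singleton_prime Polynomial.X_ne_zero).mpr Polynomial.prime_X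

/-- `R₂ = ℂ[T]_{(T)}`, the localization of `ℂ[T]` at the prime ideal `(T)`. -/
def Rtwo : Type :=
  Localization (Ideal.span {(Polynomial.X : Polynomial ℂ)}).primeCompl

noncomputable instance : CommRing Rtwo := by unfold Rtwo; infer_instance
noncomputable instance : Algebra ℂ Rtwo := by unfold Rtwo; infer_instance
noncomputable instance : Algebra (Polynomial ℂ) Rtwo := by unfold Rtwo; infer_instance

/-- `R = R₁ ⊗_ℂ R₂` with `R₁ = ℂ[X₁,…,Xₙ]`. -/
def RR (n : ℕ) : Type := MvPolynomial (Fin n) ℂ ⊗[ℂ] Rtwo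

noncomputable instance (n : ℕ) : CommRing (RR n) := by unfold RR; infer_instance

/-- The element `T = 1 ⊗ T` of `R`. -/
noncomputable def tt (n : ℕ) : RR n :=
  show MvPolynomial (Fin n) ℂ ⊗[ℂ] Rtwo from
    (1 : MvPolynomial (Fin n) ℂ) ⊗ₜ[ℂ] (algebraMap (Polynomial ℂ) Rtwo Polynomial.X)

/-- The multiplicative set of nonzero elements of `R₁`, viewed inside `R = R₁ ⊗ R₂`. -/
noncomputable def Sone (n : ℕ) : Submonoid (RR n) :=
  Submonoid.map
    (show MvPolynomial (Fin n) ℂ →* RR n from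
      (Algebra.TensorProduct.includeLeft :
        MvPolynomial (Fin n) ℂ →ₐ[ℂ] MvPolynomial (Fin n) ℂ ⊗[ℂ] Rtwo).toRingHom.toMonoidHom)
    (nonZeroDivisors (MvPolynomial (Fin n) ℂ))

/-!
Let `t ∈ R` be prime, dividing no element of the multiplicative set `S`, and let `P ⊆ M[1/t]` be
the `R`-span of an `R[1/t]`-basis. Since `S⁻¹M` is finite, there are
`m₁, …, mₖ ∈ M` such that every `m ∈ M` has a multiple `s • m`, `s ∈ S`, in their span, and a
single power `b` of `t` puts every `b • mⱼ`, hence every `s • b • m`, into `P`. Since `t` divides no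
element of `S`, the coordinates of `b • m` then have no denominators at all: `b • M ⊆ P`,
so `M` embeds into the finite module `P` over the noetherian ring `R`. For
`R = ℂ[X₁,…,Xₙ] ⊗ ℂ[T]_(T) ≅ ℂ[T]_(T)[X₁,…,Xₙ]` take `t = T`, which divides no nonzero polynomial
with complex coefficients.
-/

open Submodule

namespace IsLocalization

theorem isTorsionFree_of_le_nonZeroDivisors {R A : Type*} [CommRing R] [IsDomain R] [CommRing A]
    [Algebra R A] {S : Submonoid R} [IsLocalization S A] (hS : S ≤ nonZeroDivisors R) :
    Module.IsTorsionFree R A :=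
  have := isDomain_of_le_nonZeroDivisors A hS
  Module.isTorsionFree_iff_algebraMap_injective.mpr (IsLocalization.injective A hS)

theorem mem_range_of_algebraMap_mul_mem_range {R A : Type*} [CommRing R] [IsDomain R]
    [CommRing A] [Algebra R A] {t s : R} [IsLocalization.Away t A] (ht : Prime t)
    (hs : ¬ t ∣ s) {x : A} (hx : algebraMap R A s * x ∈ (algebraMap R A).range) :
    x ∈ (algebraMap R A).range := by
  obtain ⟨a, ha⟩ := hx
  obtain ⟨⟨b, u⟩, rfl⟩ := mk'_surjective (Submonoid.powers t) x
  obtain ⟨k, hk : t ^ k = u⟩ := u.2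
  rw [mul_mk'_eq_mk'_of_mul, eq_comm, mk'_eq_iff_eq_mul, ← map_mul, ← hk] at ha
  have hsb : s * b = a * t ^ k :=
    IsLocalization.injective A (powers_le_nonZeroDivisors_of_noZeroDivisors ht.ne_zero) ha
  obtain ⟨c, rfl⟩ := ht.pow_dvd_of_dvd_mul_left k hs ⟨a, by rw [hsb, mul_comm]⟩
  refine ⟨c, ?_⟩
  rw [eq_mk'_iff_mul_eq, ← hk, ← map_mul, mul_comm]

end IsLocalization

namespace Module.Basis

variable {R A N ι : Type*} [CommRing R] [IsDomain R] [CommRing A] [Algebra R A]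
  [AddCommGroup N] [Module R N] [Module A N] [IsScalarTower R A N] (e : Basis ι A N)

theorem exists_smul_mem_span_of_finite [Finite ι] {S : Submonoid R} [IsLocalization S A]
    (hS : S ≤ nonZeroDivisors R) {κ : Type*} [Finite κ] (x : κ → N) :
    ∃ b : S, ∀ j, (b : R) • x j ∈ span R (Set.range e) := by
  have := IsLocalization.isDomain_of_le_nonZeroDivisors A hS
  have := IsLocalization.isTorsionFree_of_le_nonZeroDivisors (A := A) hS
  obtain ⟨b, hb⟩ := IsLocalization.exist_integer_multiples_of_finite S
    fun p : ι × κ => e.repr (x p.2) p.1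
  refine ⟨b, fun j => (e.mem_span_iff_repr_mem R _).mpr fun i => ?_⟩
  obtain ⟨c, hc⟩ := hb (i, j)
  exact ⟨c, by rw [hc, LinearMapClass.map_smul_of_tower, Finsupp.smul_apply]⟩

theorem mem_span_of_smul_mem_span {t s : R} [IsLocalization.Away t A] (ht : Prime t)
    (hs : ¬ t ∣ s) {x : N} (hx : s • x ∈ span R (Set.range e)) : x ∈ span R (Set.range e) := by
  have hS := powers_le_nonZeroDivisors_of_noZeroDivisors ht.ne_zero
  have := IsLocalization.isDomain_of_le_nonZeroDivisors A hS
  have := IsLocalization.isTorsionFree_of_le_nonZeroDivisors (A := A) hS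
  rw [e.mem_span_iff_repr_mem R] at hx ⊢
  intro i
  refine IsLocalization.mem_range_of_algebraMap_mul_mem_range ht hs ?_
  obtain ⟨c, hc⟩ := hx i
  exact ⟨c, by rw [hc, LinearMapClass.map_smul_of_tower, Finsupp.smul_apply, Algebra.smul_def]⟩

end Module.Basis

namespace IsLocalizedModule

variable {R M Mₛ : Type*} [CommRing R] (S : Submonoid R) [AddCommGroup M] [Module R M]
  [AddCommGroup Mₛ] [Module R Mₛ] (f : M →ₗ[R] Mₛ) [IsLocalizedModule S f]

theorem injective_of_isTorsionFree [IsDomain R] [Module.IsTorsionFree R M] (h0 : (0 : R) ∉ S) :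
    Function.Injective f :=
  (injective_iff_isRegular S f).mpr fun s => IsSMulRegular.of_ne_zero fun hs => h0 (hs ▸ s.2)

theorem exists_finset_smul_mem_span (Rₛ : Type*) [CommRing Rₛ] [Algebra R Rₛ]
    [IsLocalization S Rₛ] [Module Rₛ Mₛ] [IsScalarTower R Rₛ Mₛ] [Module.Finite Rₛ Mₛ] :
    ∃ G : Finset M, ∀ m, ∃ s : S, s • f m ∈ span R (f '' G) := by
  classical
  obtain ⟨T, hT⟩ := ‹Module.Finite Rₛ Mₛ›
  choose num hnum using fun x => surj S f x
  refine ⟨T.image fun x => (num x).1, fun m =>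
    multiple_mem_span_of_mem_localization_span S Rₛ _ _ ?_⟩
  suffices span Rₛ (f '' ↑(T.image fun x => (num x).1)) = ⊤ from this ▸ mem_top
  refine eq_top_iff.mpr (hT ▸ span_le.mpr fun x hx => ?_)
  rw [SetLike.mem_coe, ← smul_mem_iff_of_isUnit _ (IsLocalization.map_units Rₛ (num x).2),
    algebraMap_smul, ← Submonoid.smul_def, hnum]
  exact subset_span ⟨_, Finset.mem_coe.mpr (Finset.mem_image_of_mem _ hx), rfl⟩

end IsLocalizedModule

theorem Module.Finite.of_isLocalizedModule_of_free_away {R : Type*} [CommRing R] [IsDomain R]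
    [IsNoetherianRing R] {t : R} (ht : Prime t) (S : Submonoid R) (hS : ∀ s ∈ S, ¬ t ∣ s)
    {M : Type*} [AddCommGroup M] [Module R M] [Module.IsTorsionFree R M]
    (Rₛ : Type*) [CommRing Rₛ] [Algebra R Rₛ] [IsLocalization S Rₛ]
    {Mₛ : Type*} [AddCommGroup Mₛ] [Module R Mₛ] [Module Rₛ Mₛ] [IsScalarTower R Rₛ Mₛ]
    (f₁ : M →ₗ[R] Mₛ) [IsLocalizedModule S f₁] [Module.Finite Rₛ Mₛ]
    (Rₜ : Type*) [CommRing Rₜ] [Algebra R Rₜ] [IsLocalization.Away t Rₜ]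
    {Mₜ : Type*} [AddCommGroup Mₜ] [Module R Mₜ] [Module Rₜ Mₜ] [IsScalarTower R Rₜ Mₜ]
    (f₂ : M →ₗ[R] Mₜ) [IsLocalizedModule (Submonoid.powers t) f₂]
    [Module.Free Rₜ Mₜ] [Module.Finite Rₜ Mₜ] :
    Module.Finite R M := by
  have hT := powers_le_nonZeroDivisors_of_noZeroDivisors ht.ne_zero
  have hinj₁ := IsLocalizedModule.injective_of_isTorsionFree S f₁ fun h => hS 0 h (dvd_zero t)
  have hinj₂ := IsLocalizedModule.injective_of_isTorsionFree _ f₂ fun h =>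
    zero_notMem_nonZeroDivisors (hT h)
  let e := Module.Free.chooseBasis Rₜ Mₜ
  obtain ⟨G, hG⟩ := IsLocalizedModule.exists_finset_smul_mem_span S f₁ Rₛ
  obtain ⟨b, hb⟩ := e.exists_smul_mem_span_of_finite hT fun g : G => f₂ g
  have hGb : span R G ≤ (span R (Set.range e)).comap ((b : R) • f₂) :=
    span_le.mpr fun g hg => hb ⟨g, hg⟩
  have hbM : ∀ m, (b : R) • f₂ m ∈ span R (Set.range e) := by
    intro m
    obtain ⟨s, hs⟩ := hG m
    rw [Submodule.span_image, Submonoid.smul_def, ← map_smul] at hs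
    obtain ⟨g, hg, hgm⟩ := hs
    refine e.mem_span_of_smul_mem_span ht (hS s s.2) ?_
    rw [smul_comm, ← map_smul, ← hinj₁ hgm]
    exact hGb hg
  have := Module.Finite.span_of_finite R (Set.finite_range e)
  refine Module.Finite.of_injective (((b : R) • f₂).codRestrict _ hbM) fun x y hxy => hinj₂ ?_
  exact IsLocalizedModule.smul_injective f₂ b (congrArg Subtype.val hxy)

theorem MvPolynomial.isUnit_of_C_dvd_map {K A σ : Type*} [Field K] [CommRing A] (φ : K →+* A)
    {p : MvPolynomial σ K} (hp : p ≠ 0) {a : A} (h : C a ∣ map φ p) : IsUnit a := by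
  obtain ⟨c, hc⟩ := h
  obtain ⟨m, hm⟩ := support_nonempty.mpr hp
  have hcoeff := congrArg (coeff m) hc
  rw [coeff_map, coeff_C_mul] at hcoeff
  exact isUnit_of_mul_isUnit_left (hcoeff ▸ (IsUnit.mk0 _ (mem_support_iff.mp hm)).map φ)

open Polynomial in
noncomputable abbrev idealX : Ideal ℂ[X] := Ideal.span {X}

instance : IsLocalization idealX.primeCompl Rtwo := Localization.isLocalization

instance : IsDomain Rtwo :=
  IsLocalization.isDomain_of_le_nonZeroDivisors Rtwo idealX.primeCompl_le_nonZeroDivisors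

instance : IsLocalRing Rtwo := IsLocalization.AtPrime.isLocalRing Rtwo idealX

instance : IsNoetherianRing Rtwo :=
  IsLocalization.isNoetherianRing idealX.primeCompl Rtwo inferInstance

open Polynomial in
theorem Rtwo.prime_X : Prime (algebraMap ℂ[X] Rtwo X) := by
  have hspan : Ideal.span {algebraMap ℂ[X] Rtwo X} = IsLocalRing.maximalIdeal Rtwo := by
    rw [← IsLocalization.AtPrime.map_eq_maximalIdeal idealX Rtwo, Ideal.map_span,
      Set.image_singleton]
  have hX : algebraMap ℂ[X] Rtwo X ≠ 0 := by
    rw [← map_zero (algebraMap ℂ[X] Rtwo)]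
    exact (IsLocalization.injective Rtwo idealX.primeCompl_le_nonZeroDivisors).ne X_ne_zero
  exact (Ideal.span_singleton_prime hX).mp (hspan ▸ (IsLocalRing.maximalIdeal.isMaximal _).isPrime)

namespace RR

variable (n : ℕ)

noncomputable def equivMvPolynomial : RR n ≃+* MvPolynomial (Fin n) Rtwo :=
  (Algebra.TensorProduct.comm ℂ (MvPolynomial (Fin n) ℂ) Rtwo).toRingEquiv.trans
    (MvPolynomial.algebraTensorAlgEquiv ℂ Rtwo).toRingEquiv

theorem equivMvPolynomial_tt :
    equivMvPolynomial n (tt n) = MvPolynomial.C (algebraMap (Polynomial ℂ) Rtwo Polynomial.X) := by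
  change MvPolynomial.algebraTensorAlgEquiv ℂ Rtwo (Algebra.TensorProduct.comm ℂ _ _ (1 ⊗ₜ _)) = _
  rw [Algebra.TensorProduct.comm_tmul, MvPolynomial.algebraTensorAlgEquiv_tmul, map_one,
    Algebra.smul_def, mul_one]
  rfl

theorem equivMvPolynomial_tmul_one (p : MvPolynomial (Fin n) ℂ) :
    equivMvPolynomial n (show RR n from p ⊗ₜ 1) = MvPolynomial.map (algebraMap ℂ Rtwo) p := by
  change MvPolynomial.algebraTensorAlgEquiv ℂ Rtwo (Algebra.TensorProduct.comm ℂ _ _ (p ⊗ₜ 1)) = _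
  rw [Algebra.TensorProduct.comm_tmul, MvPolynomial.algebraTensorAlgEquiv_tmul, one_smul]

instance : IsDomain (RR n) := (equivMvPolynomial n).toMulEquiv.isDomain _

instance : IsNoetherianRing (RR n) := isNoetherianRing_of_ringEquiv _ (equivMvPolynomial n).symm

theorem prime_tt : Prime (tt n) := by
  rw [← MulEquiv.prime_iff (equivMvPolynomial n).toMulEquiv]
  change Prime (equivMvPolynomial n (tt n))
  rw [equivMvPolynomial_tt]
  exact (MvPolynomial.prime_C_iff _).mpr Rtwo.prime_X

theorem not_tt_dvd_of_mem_Sone {s : RR n} (hs : s ∈ Sone n) : ¬ tt n ∣ s := by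
  obtain ⟨p, hp, rfl⟩ := hs
  intro hdvd
  refine Rtwo.prime_X.not_isUnit
    (MvPolynomial.isUnit_of_C_dvd_map (algebraMap ℂ Rtwo) (nonZeroDivisors.ne_zero hp) ?_)
  rw [← equivMvPolynomial_tt, ← equivMvPolynomial_tmul_one]
  exact map_dvd (equivMvPolynomial n) hdvd

end RR

/-- Lemma A3: a torsion-free `R`-module `M` such that `K₁M` is free of rank `r` over
`K₁ ⊗ R₂` and `K₂M` is free of rank `r` over `R₁ ⊗ K₂` is finitely generated over `R`. -/
theorem stmt_3 (n : ℕ) (r : ℕ)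
    (M : Type*) [AddCommGroup M] [Module (RR n) M]
    (htf : ∀ (a : RR n) (x : M), a • x = 0 → a = 0 ∨ x = 0)  -- `M` is torsion-free
    -- `R1t` is the localization `K₁ ⊗ R₂` of `R` at `S₁`, `M1t` is `K₁M`
    (R1t : Type*) [CommRing R1t] [Algebra (RR n) R1t] [IsLocalization (Sone n) R1t]
    (M1t : Type*) [AddCommGroup M1t] [Module (RR n) M1t] [Module R1t M1t]
    [IsScalarTower (RR n) R1t M1t]
    (f1 : M →ₗ[RR n] M1t) [IsLocalizedModule (Sone n) f1]
    (hf1 : Module.Free R1t M1t) (hf1r : Module.rank R1t M1t = r)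
    -- `R2t` is the localization `R₁ ⊗ K₂ = R[T⁻¹]` of `R`, `M2t` is `K₂M = M[T⁻¹]`
    (R2t : Type*) [CommRing R2t] [Algebra (RR n) R2t]
    [IsLocalization (Submonoid.powers (tt n)) R2t]
    (M2t : Type*) [AddCommGroup M2t] [Module (RR n) M2t] [Module R2t M2t]
    [IsScalarTower (RR n) R2t M2t]
    (f2 : M →ₗ[RR n] M2t) [IsLocalizedModule (Submonoid.powers (tt n)) f2]
    (hf2 : Module.Free R2t M2t) (hf2r : Module.rank R2t M2t = r) :
    Module.Finite (RR n) M := by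
  have := Module.IsTorsionFree.of_smul_eq_zero htf
  have : Module.Finite R1t M1t := Module.finite_of_rank_eq_nat hf1r
  have : Module.Finite R2t M2t := Module.finite_of_rank_eq_nat hf2r
  exact Module.Finite.of_isLocalizedModule_of_free_away (RR.prime_tt n) (Sone n)
    (fun _ => RR.not_tt_dvd_of_mem_Sone n) R1t f1 R2t f2
end

section
/- For s ≥ 1, the determinant of the s×s matrix (a_{i,j})_{1≤i,j≤s}, where a_{i,j} = Σ_{m=1}^{i} (-1)^{m-1} m^j · C(n+1, i-m) (i.e., a_{i,j} = 1^j C(n+1,i-1) − 2^j C(n+1,i-2) + ⋯ + (−1)^{i−1} i^j C(n+1,0)), equals (−1)^{s(s−1)/2} ∏_{m=1}^{s} m!. -/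
/-!
Reindexing `m = k + 1`, the matrix factors as `A = T * P` with `T i k = (-1)^k C(n+1, i-k)` for
`k ≤ i` (lower triangular with diagonal `(-1)^i`) and `P k j = (k+1)^(j+1)`. Pulling the factor
`k+1` out of each row of `P` leaves the Vandermonde matrix on the nodes `1, …, s`, whose
determinant is the superfactorial `∏_{m<s} m!`; together with `∏ (k+1) = s!` this is `∏_{m≤s} m!`.
-/

open Finset Matrix
open scoped Nat

theorem Fin.prod_pow_val {M : Type*} [CommMonoid M] (a : M) (s : ℕ) :
    ∏ i : Fin s, a ^ (i : ℕ) = a ^ (s * (s - 1) / 2) := by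
  rw [prod_pow_eq_pow_sum, Fin.sum_univ_eq_sum_range (fun k => k), sum_range_id]

namespace Matrix

variable {R : Type*} [CommRing R]

def signedToeplitz (c : ℕ → R) (s : ℕ) : Matrix (Fin s) (Fin s) R :=
  of fun i k => if k ≤ i then (-1) ^ (k : ℕ) * c (i - k) else 0

def succPowSucc (s : ℕ) : Matrix (Fin s) (Fin s) R :=
  of fun k j => ((k : R) + 1) ^ ((j : ℕ) + 1)

theorem det_signedToeplitz (c : ℕ → R) (s : ℕ) :
    (signedToeplitz c s).det = (-1) ^ (s * (s - 1) / 2) * c 0 ^ s := by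
  rw [det_of_isLowerTriangular (signedToeplitz c s)
    fun i k (hik : i < k) => if_neg (not_le.2 hik)]
  simp only [signedToeplitz, of_apply, le_refl, if_true, Nat.sub_self, prod_mul_distrib,
    Fin.prod_pow_val, prod_const, Finset.card_fin]

theorem succPowSucc_eq_diagonal_mul_vandermonde (s : ℕ) :
    succPowSucc s = diagonal (fun k : Fin s => (k : R) + 1) *
      vandermonde (fun k : Fin s => (k : R) + 1) := by
  ext k j
  simp [succPowSucc, vandermonde, pow_succ, mul_comm]

theorem det_succPowSucc (s : ℕ) :
    (succPowSucc s : Matrix (Fin s) (Fin s) R).det = ∏ m ∈ Icc 1 s, (m ! : R) := by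
  rw [succPowSucc_eq_diagonal_mul_vandermonde, det_mul, det_diagonal,
    det_vandermonde_add (fun k : Fin s => (k : R))]
  cases s with
  | zero => simp
  | succ t =>
    rw [det_vandermonde_id_eq_superFactorial, Fin.prod_univ_eq_prod_range (fun k => (k : R) + 1)]
    norm_cast
    rw [prod_range_add_one_eq_factorial, Nat.prod_Icc_factorial, Nat.superFactorial_succ]

theorem sum_Icc_neg_one_pow_mul_eq_mul_apply (c : ℕ → R) {s : ℕ} (i j : Fin s) :
    ∑ m ∈ Icc 1 ((i : ℕ) + 1), (-1) ^ (m - 1) * (m : R) ^ ((j : ℕ) + 1) * c ((i : ℕ) + 1 - m) =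
      (signedToeplitz c s * succPowSucc s : Matrix (Fin s) (Fin s) R) i j := by
  have hfilter : (range s).filter (· ≤ (i : ℕ)) = range ((i : ℕ) + 1) := by
    ext k; simp only [mem_filter, mem_range]; omega
  simp only [mul_apply, signedToeplitz, succPowSucc, of_apply, ite_mul, zero_mul, Fin.le_def]
  rw [Fin.sum_univ_eq_sum_range (fun k => if k ≤ (i : ℕ) then
    (-1) ^ k * c (i - k) * ((k : R) + 1) ^ ((j : ℕ) + 1) else 0), ← sum_filter, hfilter,
    ← Ico_add_one_right_eq_Icc, sum_Ico_eq_sum_range]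
  refine sum_congr (by simp) fun k _ => ?_
  rw [add_comm 1 k, add_tsub_cancel_right, Nat.add_sub_add_right]
  push_cast
  ring

end Matrix

theorem stmt_6_general (n s : ℕ)
    (A : Matrix (Fin s) (Fin s) ℚ)
    (hA : ∀ i j : Fin s, A i j =
      ∑ m ∈ Finset.Icc 1 (i.1 + 1),
        (-1 : ℚ) ^ (m - 1) * (m : ℚ) ^ (j.1 + 1) * ((n + 1).choose (i.1 + 1 - m) : ℚ)) :
    A.det = (-1 : ℚ) ^ (s * (s - 1) / 2) * ∏ m ∈ Finset.Icc 1 s, (m.factorial : ℚ) := by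
  set c : ℕ → ℚ := fun k => ((n + 1).choose k : ℚ)
  have hfactor : A = signedToeplitz c s * succPowSucc s := by
    ext i j
    exact (hA i j).trans (sum_Icc_neg_one_pow_mul_eq_mul_apply c i j)
  rw [hfactor, det_mul, det_signedToeplitz, det_succPowSucc]
  simp only [c, Nat.choose_zero_right, Nat.cast_one, one_pow, mul_one]

/-- For `1 ≤ s ≤ n`, the determinant of the `s × s` matrix with entries
`a_{i,j} = Σ_{m=1}^{i} (-1)^{m-1} m^j C(n+1, i-m)` (for `1 ≤ i, j ≤ s`)
equals `(-1)^{s(s-1)/2} ∏_{m=1}^{s} m!`. -/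
theorem stmt_6 (n s : ℕ) (hs : 1 ≤ s) (hns : s ≤ n)
    (A : Matrix (Fin s) (Fin s) ℚ)
    (hA : ∀ i j : Fin s, A i j =
      ∑ m ∈ Finset.Icc 1 (i.1 + 1),
        (-1 : ℚ) ^ (m - 1) * (m : ℚ) ^ (j.1 + 1) * ((n + 1).choose (i.1 + 1 - m) : ℚ)) :
    A.det = (-1 : ℚ) ^ (s * (s - 1) / 2) * ∏ m ∈ Finset.Icc 1 s, (m.factorial : ℚ) :=
  stmt_6_general n s A hA
end

section
/- Let Z be a graded commutative ℂ-algebra with augmentation ideal Z⁺, and z'₁,…,z'ₙ elements of Z[[q−1]] whose images in (Z⁺/(Z⁺)²)[[q−1]] are Σⱼ a_{ij} C_{mⱼ} (q−1)^{mⱼ} for homogeneous elements C_{m₁},…,C_{mₙ} forming a basis of Z⁺/(Z⁺)², with (a_{ij}) ∈ ℂ^{n×n}. If the z'ᵢ generate Z ⊗ ℂ(q) as a ℂ(q)-algebra and some polynomial combination of the z'ᵢ and (q−1)⁻¹ specializes at q = 1 onto each C_{mⱼ}, then the matrix (a_{ij}) is invertible. -/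
/-!
Taking linear coefficients `p ↦ ∂p/∂C_j (0)` is a derivation of `Z` over its augmentation, and
applied coefficientwise it becomes a derivation of Laurent series in `q - 1`. Such a derivation
maps the algebra generated by `(q-1)⁻¹` and the `z'ᵢ` into the `ℂ((q-1))`-span of the images
of the `z'ᵢ`, and modulo `(Z⁺)²` these images are the rows `(a_{ij} (q-1)^{m_j})_j`. Since
`C_j` is sent to the `j`-th unit vector, the rows span `ℂ((q-1))ⁿ`, so `(a_{ij})` is invertible.
-/

open HahnSeries

namespace HahnSeries

variable {Γ : Type*} [AddCommMonoid Γ] [PartialOrder Γ] [IsOrderedCancelAddMonoid Γ]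

theorem coeff_mul_eq_sum_of_support_subset {R : Type*} [NonUnitalNonAssocSemiring R]
    {x y : HahnSeries Γ R} {s t : Set Γ} (hs : s.IsPWO) (ht : t.IsPWO)
    (hxs : x.support ⊆ s) (hyt : y.support ⊆ t) (a : Γ) :
    (x * y).coeff a = ∑ ij ∈ Finset.antidiagonal hs ht a, x.coeff ij.1 * y.coeff ij.2 := by
  rw [coeff_mul]
  refine Finset.sum_subset ((Finset.antidiagonal_mono_left hxs).trans
    (Finset.antidiagonal_mono_right hyt)) fun ij hst hxy => ?_
  by_contra hne
  obtain ⟨hx, hy⟩ := ne_zero_and_ne_zero_of_mul hne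
  exact hxy (Finset.mem_antidiagonal.2 ⟨hx, hy, (Finset.mem_antidiagonal.1 hst).2.2⟩)

theorem map_mul_of_leibniz {A B : Type*} [NonUnitalNonAssocSemiring A]
    [NonUnitalNonAssocSemiring B] {F : Type*} [FunLike F A B] [ZeroHomClass F A B] (f : F)
    (d : A →+ B) (hd : ∀ a b, d (a * b) = f a * d b + d a * f b) (x y : HahnSeries Γ A) :
    (x * y).map d = x.map f * y.map d + x.map d * y.map f := by
  ext g
  have hsf (z : HahnSeries Γ A) : (z.map f).support ⊆ z.support :=
    Function.support_comp_subset (map_zero f) _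
  have hsd (z : HahnSeries Γ A) : (z.map d).support ⊆ z.support :=
    Function.support_comp_subset (map_zero d) _
  have hx := x.isPWO_support
  have hy := y.isPWO_support
  rw [coeff_add, coeff_mul_eq_sum_of_support_subset hx hy (hsf x) (hsd y),
    coeff_mul_eq_sum_of_support_subset hx hy (hsd x) (hsf y),
    ← Finset.sum_add_distrib, map_coeff, coeff_mul, map_sum]
  simp only [hd, map_coeff]

end HahnSeries

theorem map_eq_zero_of_mem_sq_of_leibniz {A B : Type*} [CommSemiring A]
    [NonUnitalNonAssocSemiring B] (f : A → B) (d : A →+ B)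
    (hd : ∀ a b, d (a * b) = f a * d b + d a * f b) {I : Ideal A} (hI : ∀ a ∈ I, f a = 0)
    {p : A} (hp : p ∈ I ^ 2) : d p = 0 := by
  rw [sq] at hp
  refine Submodule.mul_induction_on hp (fun a ha b hb => ?_) fun x y hx hy => ?_
  · rw [hd, hI a ha, hI b hb, zero_mul, mul_zero, add_zero]
  · rw [map_add, hx, hy, add_zero]

theorem mem_span_image_of_mem_adjoin_of_leibniz {R A K M : Type*} [CommSemiring R] [Semiring A]
    [Algebra R A] [Semiring K] [AddCommMonoid M] [Module K M] (ε : A → K) (D : A →+ M)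
    (hD : ∀ a b, D (a * b) = ε a • D b + ε b • D a) (halg : ∀ r, D (algebraMap R A r) = 0)
    {s : Set A} {a : A} (ha : a ∈ Algebra.adjoin R s) : D a ∈ Submodule.span K (D '' s) := by
  induction ha using Algebra.adjoin_induction with
  | mem x hx => exact Submodule.subset_span ⟨x, hx, rfl⟩
  | algebraMap r => rw [halg]; exact zero_mem _
  | add x y _ _ hx hy => rw [map_add]; exact add_mem hx hy
  | mul x y _ _ hx hy =>
    rw [hD]
    exact add_mem (Submodule.smul_mem _ _ hy) (Submodule.smul_mem _ _ hx)

theorem Matrix.isUnit_of_span_row_eq_top {K ι : Type*} [CommRing K] [Fintype ι] [DecidableEq ι]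
    {A : Matrix ι ι K} (h : Submodule.span K (Set.range A.row) = ⊤) : IsUnit A := by
  rw [← Matrix.vecMul_surjective_iff_isUnit, ← Matrix.coe_vecMulLinear,
    ← LinearMap.range_eq_top, range_vecMulLinear, h]

namespace MvPolynomial

section

variable {σ R : Type*} [CommSemiring R]

noncomputable def linearCoeff (j : σ) : MvPolynomial σ R →+ R :=
  constantCoeff.toAddMonoidHom.comp (pderiv j).toAddMonoidHom

theorem linearCoeff_apply (j : σ) (p : MvPolynomial σ R) :
    linearCoeff j p = constantCoeff (pderiv j p) := rfl

theorem linearCoeff_mul (j : σ) (p q : MvPolynomial σ R) :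
    linearCoeff j (p * q) =
      constantCoeff p * linearCoeff j q + linearCoeff j p * constantCoeff q := by
  rw [linearCoeff_apply, linearCoeff_apply, linearCoeff_apply, Derivation.leibniz, smul_eq_mul,
    smul_eq_mul, map_add, map_mul, map_mul, mul_comm (constantCoeff q)]

theorem linearCoeff_C (j : σ) (r : R) : linearCoeff j (C r : MvPolynomial σ R) = 0 := by
  simp [linearCoeff_apply]

theorem linearCoeff_one (j : σ) : linearCoeff j (1 : MvPolynomial σ R) = 0 := by
  rw [← C_1, linearCoeff_C]

theorem linearCoeff_X [DecidableEq σ] (j k : σ) :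
    linearCoeff j (X k : MvPolynomial σ R) = Pi.single (M := fun _ => R) j 1 k := by
  rw [linearCoeff_apply, pderiv_X]
  by_cases hjk : j = k
  · subst hjk; simp
  · simp [hjk]

theorem linearCoeff_eq_zero_of_mem_sq (j : σ) {p : MvPolynomial σ R}
    (hp : p ∈ Ideal.span (Set.range (X : σ → MvPolynomial σ R)) ^ 2) :
    linearCoeff j p = 0 := by
  refine map_eq_zero_of_mem_sq_of_leibniz constantCoeff (linearCoeff j) (linearCoeff_mul j)
    (fun a ha => ?_) hp
  refine (Ideal.span_le (I := RingHom.ker constantCoeff)).2 ?_ ha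
  rintro _ ⟨k, rfl⟩
  exact constantCoeff_X R k

end

section

variable {σ R : Type*} [CommRing R]

theorem linearCoeff_eq_of_sub_mem_sq [DecidableEq σ] (j : σ) {p : MvPolynomial σ R}
    {s : Finset σ} {c : σ → R}
    (h : p - ∑ k ∈ s, c k • (X k : MvPolynomial σ R) ∈
      Ideal.span (Set.range (X : σ → MvPolynomial σ R)) ^ 2) :
    linearCoeff j p = if j ∈ s then c j else 0 := by
  rw [← sub_add_cancel p (∑ k ∈ s, c k • X k), map_add, linearCoeff_eq_zero_of_mem_sq j h,
    zero_add, map_sum]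
  simp [smul_eq_C_mul, linearCoeff_mul, linearCoeff_C, linearCoeff_X, Pi.single_apply]

end

end MvPolynomial

namespace LaurentSeries

open MvPolynomial

section

variable {σ R : Type*} [CommSemiring R]

noncomputable def linearCoeff :
    LaurentSeries (MvPolynomial σ R) →+ (σ → LaurentSeries R) where
  toFun t j := t.map (MvPolynomial.linearCoeff j)
  map_zero' := by ext; simp
  map_add' t u := by funext j; exact HahnSeries.map_add _

theorem linearCoeff_apply (t : LaurentSeries (MvPolynomial σ R)) (j : σ) :
    linearCoeff t j = t.map (MvPolynomial.linearCoeff j) := rfl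

theorem linearCoeff_mul (t u : LaurentSeries (MvPolynomial σ R)) :
    linearCoeff (t * u) =
      t.map constantCoeff • linearCoeff u + u.map constantCoeff • linearCoeff t := by
  funext j
  rw [Pi.add_apply, Pi.smul_apply, Pi.smul_apply, smul_eq_mul, smul_eq_mul, linearCoeff_apply,
    linearCoeff_apply, linearCoeff_apply, map_mul_of_leibniz constantCoeff _
      (MvPolynomial.linearCoeff_mul j), mul_comm (u.map constantCoeff)]

theorem linearCoeff_single (g : ℤ) (p : MvPolynomial σ R) :
    linearCoeff (single g p) = fun j => single g (MvPolynomial.linearCoeff j p) := by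
  funext j
  ext b
  by_cases hb : b = g <;> simp [linearCoeff_apply, hb]

theorem linearCoeff_algebraMap (r : R) :
    linearCoeff (algebraMap R (LaurentSeries (MvPolynomial σ R)) r) = 0 := by
  rw [HahnSeries.algebraMap_apply', PowerSeries.algebraMap_apply, ofPowerSeries_C,
    HahnSeries.C_apply, linearCoeff_single, MvPolynomial.algebraMap_eq]
  funext j
  rw [MvPolynomial.linearCoeff_C, single_eq_zero, Pi.zero_apply]

theorem linearCoeff_single_one (g : ℤ) : linearCoeff (single g (1 : MvPolynomial σ R)) = 0 := by
  rw [linearCoeff_single]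
  funext j
  rw [MvPolynomial.linearCoeff_one, single_eq_zero, Pi.zero_apply]

theorem linearCoeff_C_X [DecidableEq σ] (k : σ) :
    linearCoeff (HahnSeries.C (X k : MvPolynomial σ R)) = Pi.single k 1 := by
  rw [HahnSeries.C_apply, linearCoeff_single]
  funext j
  rw [MvPolynomial.linearCoeff_X]
  by_cases hjk : j = k
  · subst hjk; simp
  · simp [hjk, Ne.symm hjk]

end

theorem linearCoeff_ofPowerSeries {σ R : Type*} [CommRing R] [Fintype σ] [DecidableEq σ]
    (m : σ → ℕ) (c : σ → R) (z : PowerSeries (MvPolynomial σ R))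
    (hz : ∀ k, PowerSeries.coeff k z - ∑ j ∈ Finset.univ.filter (m · = k), c j • X j ∈
      Ideal.span (Set.range (X : σ → MvPolynomial σ R)) ^ 2) :
    linearCoeff (ofPowerSeries ℤ _ z) = fun j => single (m j : ℤ) (c j) := by
  funext j
  ext g
  rw [linearCoeff_apply, map_coeff, PowerSeries.coeff_coe, coeff_single]
  split_ifs with hg hgm hgm
  · omega
  · exact map_zero _
  · rw [MvPolynomial.linearCoeff_eq_of_sub_mem_sq j (hz _), hgm, Int.natAbs_natCast]
    simp
  · rw [MvPolynomial.linearCoeff_eq_of_sub_mem_sq j (hz _), if_neg]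
    simp only [Finset.mem_filter, Finset.mem_univ, true_and]
    omega

end LaurentSeries

theorem isUnit_det_of_span_monomial_rows_eq_top {k ι : Type*} [Field k] [Fintype ι]
    [DecidableEq ι] (m : ι → ℤ) (a : ι → ι → k)
    (h : Submodule.span (LaurentSeries k) (Set.range fun i j => single (m j) (a i j)) = ⊤) :
    IsUnit (Matrix.of a).det := by
  have hM : Matrix.of (fun i j => single (m j) (a i j)) =
      (Matrix.of a).map C * Matrix.diagonal fun j => single (m j) (1 : k) := by
    ext i j
    simp [Matrix.mul_diagonal, single_mul_single]
  have hunit :=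
    Matrix.isUnit_of_span_row_eq_top (A := Matrix.of fun i j => single (m j) (a i j)) h
  rw [hM, Matrix.isUnit_iff_isUnit_det, Matrix.det_mul, ← RingHom.mapMatrix_apply,
    ← RingHom.map_det] at hunit
  refine isUnit_iff_ne_zero.2 fun h0 => ?_
  simpa [h0] using isUnit_of_mul_isUnit_left hunit

theorem stmt_13_general (n : ℕ) (m : Fin n → ℕ)
    (Zp2 : Ideal (MvPolynomial (Fin n) ℂ))
    (hZp2 : Zp2 = (Ideal.span (Set.range (MvPolynomial.X : Fin n → MvPolynomial (Fin n) ℂ))) ^ 2)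
    (z' : Fin n → PowerSeries (MvPolynomial (Fin n) ℂ))
    (a : Fin n → Fin n → ℂ)
    (h1 : ∀ i : Fin n, ∀ k : ℕ,
      (PowerSeries.coeff k) (z' i) -
        ∑ j ∈ Finset.univ.filter (fun j => m j = k), a i j • MvPolynomial.X j ∈ Zp2)
    (hgen : ∀ j : Fin n,
      ((HahnSeries.ofPowerSeries ℤ (MvPolynomial (Fin n) ℂ))
          (PowerSeries.C (MvPolynomial.X j)) :
        LaurentSeries (MvPolynomial (Fin n) ℂ)) ∈
      Algebra.adjoin ℂ
        ({HahnSeries.single (-1 : ℤ) (1 : MvPolynomial (Fin n) ℂ)} ∪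
          Set.range fun i => (HahnSeries.ofPowerSeries ℤ (MvPolynomial (Fin n) ℂ)) (z' i))) :
    IsUnit (Matrix.det (Matrix.of a)) := by
  subst hZp2
  have hrow i := LaurentSeries.linearCoeff_ofPowerSeries m (a i) (z' i) (h1 i)
  refine isUnit_det_of_span_monomial_rows_eq_top (fun j => (m j : ℤ)) a <| eq_top_iff.2 ?_
  rw [← (Pi.basisFun (LaurentSeries ℂ) (Fin n)).span_eq, Submodule.span_le]
  rintro _ ⟨j, rfl⟩
  have hX := mem_span_image_of_mem_adjoin_of_leibniz _ LaurentSeries.linearCoeff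
    LaurentSeries.linearCoeff_mul LaurentSeries.linearCoeff_algebraMap (hgen j)
  rw [ofPowerSeries_C, LaurentSeries.linearCoeff_C_X] at hX
  rw [Pi.basisFun_apply]
  refine Submodule.span_le.2 ?_ hX
  rintro _ ⟨t, ht | ⟨i, rfl⟩, rfl⟩
  · rw [Set.mem_singleton_iff.1 ht, LaurentSeries.linearCoeff_single_one]
    exact zero_mem _
  · exact Submodule.subset_span ⟨i, (hrow i).symm⟩

/-- Let `Z = ℂ[C₁,…,Cₙ]` be a graded polynomial algebra with generators `Cⱼ = Xⱼ` of
degrees `0 < m₁ ≤ … ≤ mₙ`, `Z⁺` its augmentation ideal, and `z'₁,…,z'ₙ ∈ Z[[q-1]]`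
whose images in `(Z⁺/(Z⁺)²)[[q-1]]` are `Σⱼ a_{ij} Cⱼ (q-1)^{mⱼ}`.  If the `z'ᵢ`
generate `Z ⊗ ℂ(q)` as a `ℂ(q)`-algebra (each `Cⱼ` lies in the algebra generated by
the `z'ᵢ` and `(q-1)^{-1}`, inside Laurent series in `q - 1`) and some polynomial
combination of the `z'ᵢ` and `(q-1)^{-1}` lies in `Z[[q-1]]` and specializes at
`q = 1` (constant term) onto each `Cⱼ`, then the matrix `(a_{ij})` is invertible. -/
theorem stmt_13 (n : ℕ) (m : Fin n → ℕ) (hm : ∀ j, 0 < m j) (hmono : Monotone m)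
    (Zp2 : Ideal (MvPolynomial (Fin n) ℂ))
    (hZp2 : Zp2 = (Ideal.span (Set.range (MvPolynomial.X : Fin n → MvPolynomial (Fin n) ℂ))) ^ 2)
    (z' : Fin n → PowerSeries (MvPolynomial (Fin n) ℂ))
    (a : Fin n → Fin n → ℂ)
    (h1 : ∀ i : Fin n, ∀ k : ℕ,
      (PowerSeries.coeff k) (z' i) -
        ∑ j ∈ Finset.univ.filter (fun j => m j = k), a i j • MvPolynomial.X j ∈ Zp2)
    (hgen : ∀ j : Fin n,
      ((HahnSeries.ofPowerSeries ℤ (MvPolynomial (Fin n) ℂ))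
          (PowerSeries.C (MvPolynomial.X j)) :
        LaurentSeries (MvPolynomial (Fin n) ℂ)) ∈
      Algebra.adjoin ℂ
        ({HahnSeries.single (-1 : ℤ) (1 : MvPolynomial (Fin n) ℂ)} ∪
          Set.range fun i => (HahnSeries.ofPowerSeries ℤ (MvPolynomial (Fin n) ℂ)) (z' i)))
    (hspec : ∀ j : Fin n, ∃ P ∈ Algebra.adjoin ℂ (Set.range z'), ∃ k : ℕ,
      ∃ w : PowerSeries (MvPolynomial (Fin n) ℂ),
        P = PowerSeries.X ^ k * w ∧
          PowerSeries.constantCoeff w = MvPolynomial.X j) :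
    IsUnit (Matrix.det (Matrix.of a)) :=
  stmt_13_general n m Zp2 hZp2 z' a h1 hgen
end

section
/- Define a ℂ(q)-algebra with basis {a_ψ : ψ ∈ C₀} for a saturated submonoid C₀ ⊆ ℕ^N and multiplication a_ψ a_φ = 0 if ℰ(ψ+φ) ≺ ℰ(ψ)+ℰ(φ) and a_ψ a_φ = q^{c(ψ,φ)} a_{ψ+φ} if ℰ(ψ+φ) = ℰ(ψ)+ℰ(φ), where c is a ℤ-bilinear form on ℕ^N. Then this multiplication is associative. -/
/-!
By biadditivity it suffices to compare `(a_ψ a_φ) a_τ` and `a_ψ (a_φ a_τ)`. Both are multiples of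
`a_{ψ+φ+τ}` with the same power of `q`, by bilinearity of `c`. Each is nonzero exactly when `ℰ` is
additive on the triple: the two defects `ℰ(ψ) + ℰ(φ) - ℰ(ψ+φ)` and `ℰ(ψ+φ) + ℰ(τ) - ℰ(ψ+φ+τ)` lie
in `P⁺` and sum to the total defect, so by pointedness of `P⁺` both vanish iff the total one does;
likewise for the other bracketing.
-/

/-- The multiplication with basis `{a_ψ : ψ ∈ C₀}`:
`a_ψ a_φ = 0` if `ℰ(ψ+φ) ≺ ℰ(ψ)+ℰ(φ)` and `a_ψ a_φ = q^{c(ψ,φ)} a_{ψ+φ}` if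
`ℰ(ψ+φ) = ℰ(ψ)+ℰ(φ)`, extended bilinearly to `⊕_{ψ ∈ C₀} ℂ(q)·a_ψ`. -/
noncomputable def harmMul (N : ℕ) (P : Type*) [AddCommGroup P] [DecidableEq P]
    (C : AddSubmonoid (Fin N → ℕ)) (E : (Fin N → ℕ) → P)
    (c : (Fin N → ℕ) → (Fin N → ℕ) → ℤ)
    (f g : C →₀ RatFunc ℂ) : C →₀ RatFunc ℂ :=
  f.sum fun ψ x =>
    g.sum fun φ y =>
      if E ((ψ : Fin N → ℕ) + (φ : Fin N → ℕ)) = E ψ + E φ then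
        Finsupp.single (ψ + φ) (x * y * (RatFunc.X : RatFunc ℂ) ^ (c ψ φ))
      else 0

theorem eq_zero_and_eq_zero_of_add_eq_zero_of_pointed {P : Type*} [AddCommGroup P]
    {S : AddSubmonoid P} (hS : ∀ x ∈ S, -x ∈ S → x = 0) {u v : P} (hu : u ∈ S) (hv : v ∈ S)
    (huv : u + v = 0) : u = 0 ∧ v = 0 := by
  have hu0 : u = 0 := hS u hu (neg_eq_of_add_eq_zero_right huv ▸ hv)
  exact ⟨hu0, by rwa [hu0, zero_add] at huv⟩

section Subadditive

variable {M P : Type*} [AddSemigroup M] [AddCommGroup P] {S : AddSubmonoid P} {E : M → P}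

theorem map_add_and_map_add_add_iff (hS : ∀ x ∈ S, -x ∈ S → x = 0)
    (hE : ∀ a b, E a + E b - E (a + b) ∈ S) (a b d : M) :
    E (a + b) = E a + E b ∧ E (a + b + d) = E (a + b) + E d ↔
      E (a + b + d) = E a + E b + E d := by
  refine ⟨fun ⟨hab, habd⟩ => by rw [habd, hab], fun h => ?_⟩
  obtain ⟨hab, habd⟩ := eq_zero_and_eq_zero_of_add_eq_zero_of_pointed hS (hE a b) (hE (a + b) d)
    (by rw [h]; abel)
  exact ⟨(sub_eq_zero.mp hab).symm, (sub_eq_zero.mp habd).symm⟩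

theorem map_add_and_map_add_add_iff' (hS : ∀ x ∈ S, -x ∈ S → x = 0)
    (hE : ∀ a b, E a + E b - E (a + b) ∈ S) (a b d : M) :
    E (b + d) = E b + E d ∧ E (a + (b + d)) = E a + E (b + d) ↔
      E (a + (b + d)) = E a + E b + E d := by
  refine ⟨fun ⟨hbd, habd⟩ => by rw [habd, hbd, add_assoc], fun h => ?_⟩
  obtain ⟨hbd, habd⟩ := eq_zero_and_eq_zero_of_add_eq_zero_of_pointed hS (hE b d) (hE a (b + d))
    (by rw [h]; abel)
  exact ⟨(sub_eq_zero.mp hbd).symm, (sub_eq_zero.mp habd).symm⟩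

theorem map_add_and_map_add_add_iff_assoc (hS : ∀ x ∈ S, -x ∈ S → x = 0)
    (hE : ∀ a b, E a + E b - E (a + b) ∈ S) (a b d : M) :
    E (a + b) = E a + E b ∧ E (a + b + d) = E (a + b) + E d ↔
      E (b + d) = E b + E d ∧ E (a + (b + d)) = E a + E (b + d) := by
  rw [map_add_and_map_add_add_iff hS hE, map_add_and_map_add_add_iff' hS hE, add_assoc]

end Subadditive

theorem Finsupp.assoc_of_single {α R : Type*} [AddCommMonoid R]
    (mul : (α →₀ R) →+ (α →₀ R) →+ (α →₀ R))
    (h : ∀ a b d x y z, mul (mul (single a x) (single b y)) (single d z) =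
      mul (single a x) (mul (single b y) (single d z)))
    (f g k : α →₀ R) : mul (mul f g) k = mul f (mul g k) := by
  induction f using Finsupp.induction_linear with
  | zero => simp
  | add f f' hf hf' => simp [hf, hf']
  | single a x =>
    induction g using Finsupp.induction_linear with
    | zero => simp
    | add g g' hg hg' => simp [hg, hg']
    | single b y =>
      induction k using Finsupp.induction_linear with
      | zero => simp
      | add k k' hk hk' => simp [hk, hk']
      | single d z => exact h a b d x y z

namespace harmMul

variable {N : ℕ} {P : Type*} [AddCommGroup P] [DecidableEq P]
    {C : AddSubmonoid (Fin N → ℕ)} {E : (Fin N → ℕ) → P} {c : (Fin N → ℕ) → (Fin N → ℕ) → ℤ}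

theorem zero_left (g : C →₀ RatFunc ℂ) : harmMul N P C E c 0 g = 0 := by
  simp [harmMul]

theorem zero_right (f : C →₀ RatFunc ℂ) : harmMul N P C E c f 0 = 0 := by
  simp [harmMul]

theorem add_left (f f' g : C →₀ RatFunc ℂ) :
    harmMul N P C E c (f + f') g = harmMul N P C E c f g + harmMul N P C E c f' g := by
  refine Finsupp.sum_add_index' (fun ψ => Finset.sum_eq_zero fun φ _ => ?_) fun ψ x x' => ?_
  · simp
  · rw [← Finsupp.sum_add]
    refine Finsupp.sum_congr fun φ _ => ?_
    split <;> simp [add_mul, Finsupp.single_add]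

theorem add_right (f g g' : C →₀ RatFunc ℂ) :
    harmMul N P C E c f (g + g') = harmMul N P C E c f g + harmMul N P C E c f g' := by
  rw [harmMul, harmMul, harmMul, ← Finsupp.sum_add]
  refine Finsupp.sum_congr fun ψ _ => Finsupp.sum_add_index' (fun φ => ?_) fun φ y y' => ?_
  · simp
  · split <;> simp [mul_add, add_mul, Finsupp.single_add]

variable (N P C E c) in
noncomputable def addMonoidHom : (C →₀ RatFunc ℂ) →+ (C →₀ RatFunc ℂ) →+ (C →₀ RatFunc ℂ) :=
  AddMonoidHom.mk' (fun f => AddMonoidHom.mk' (harmMul N P C E c f) (add_right f))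
    fun f f' => AddMonoidHom.ext (add_left f f')

theorem single_single (ψ φ : C) (x y : RatFunc ℂ) :
    harmMul N P C E c (Finsupp.single ψ x) (Finsupp.single φ y) =
      if E ((ψ : Fin N → ℕ) + φ) = E ψ + E φ then
        Finsupp.single (ψ + φ) (x * y * RatFunc.X ^ c ψ φ)
      else 0 := by
  rw [harmMul, Finsupp.sum_single_index, Finsupp.sum_single_index]
  · simp
  · exact Finset.sum_eq_zero fun φ' _ => by simp

theorem single_single_single_left (ψ φ τ : C) (x y z : RatFunc ℂ) :
    harmMul N P C E c (harmMul N P C E c (Finsupp.single ψ x) (Finsupp.single φ y))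
        (Finsupp.single τ z) =
      if E ((ψ : Fin N → ℕ) + φ) = E ψ + E φ ∧
          E ((ψ : Fin N → ℕ) + φ + τ) = E ((ψ : Fin N → ℕ) + φ) + E τ then
        Finsupp.single (ψ + φ + τ) (x * y * z * RatFunc.X ^ (c ψ φ + c (ψ + φ) τ))
      else 0 := by
  rw [single_single, ite_and]
  split_ifs
  · rw [single_single, AddSubmonoid.coe_add, if_pos ‹_›, zpow_add₀ RatFunc.X_ne_zero]
    ring_nf
  · rwa [single_single, AddSubmonoid.coe_add, if_neg]
  · exact zero_left _

theorem single_single_single_right (ψ φ τ : C) (x y z : RatFunc ℂ) :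
    harmMul N P C E c (Finsupp.single ψ x)
        (harmMul N P C E c (Finsupp.single φ y) (Finsupp.single τ z)) =
      if E ((φ : Fin N → ℕ) + τ) = E φ + E τ ∧
          E ((ψ : Fin N → ℕ) + (φ + τ)) = E ψ + E ((φ : Fin N → ℕ) + τ) then
        Finsupp.single (ψ + (φ + τ)) (x * y * z * RatFunc.X ^ (c ψ (φ + τ) + c φ τ))
      else 0 := by
  rw [single_single, ite_and]
  split_ifs
  · rw [single_single, AddSubmonoid.coe_add, if_pos ‹_›, zpow_add₀ RatFunc.X_ne_zero]
    ring_nf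
  · rwa [single_single, AddSubmonoid.coe_add, if_neg]
  · exact zero_right _

end harmMul

theorem stmt_18_general (N : ℕ) (P : Type*) [AddCommGroup P] [DecidableEq P]
    (Pplus : AddSubmonoid P)
    (hpointed : ∀ x ∈ Pplus, -x ∈ Pplus → x = 0)
    (C : AddSubmonoid (Fin N → ℕ))
    (E : (Fin N → ℕ) → P)
    (hEsub : ∀ a b, E a + E b - E (a + b) ∈ Pplus)
    (c : (Fin N → ℕ) → (Fin N → ℕ) → ℤ)
    (hcl : ∀ a b d, c (a + b) d = c a d + c b d)
    (hcr : ∀ a b d, c a (b + d) = c a b + c a d) :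
    ∀ f g h : C →₀ RatFunc ℂ,
      harmMul N P C E c (harmMul N P C E c f g) h =
        harmMul N P C E c f (harmMul N P C E c g h) := by
  refine Finsupp.assoc_of_single (harmMul.addMonoidHom N P C E c) fun ψ φ τ x y z => ?_
  have hexp : c ψ φ + c (ψ + φ) τ = c ψ (φ + τ) + c φ τ := by
    rw [hcl, hcr]
    ring
  simp only [harmMul.addMonoidHom, AddMonoidHom.mk'_apply]
  rw [harmMul.single_single_single_left, harmMul.single_single_single_right, hexp, add_assoc ψ]
  simp only [map_add_and_map_add_add_iff_assoc hpointed hEsub]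

/-- Theorem (3.5): the above multiplication is associative, when `C₀` is a saturated
submonoid of `ℕ^N`, `ℰ` is subadditive with values in a partially ordered group
(ordered by a pointed submonoid `P⁺`), and `c` is `ℤ`-bilinear. -/
theorem stmt_18 (N : ℕ) (P : Type*) [AddCommGroup P] [DecidableEq P]
    (Pplus : AddSubmonoid P)
    (hpointed : ∀ x ∈ Pplus, -x ∈ Pplus → x = 0)
    (C : AddSubmonoid (Fin N → ℕ))
    (hsat : ∀ k : ℕ, 0 < k → ∀ ψ, k • ψ ∈ C → ψ ∈ C)
    (E : (Fin N → ℕ) → P)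
    (hEsub : ∀ a b, E a + E b - E (a + b) ∈ Pplus)
    (c : (Fin N → ℕ) → (Fin N → ℕ) → ℤ)
    (hcl : ∀ a b d, c (a + b) d = c a d + c b d)
    (hcr : ∀ a b d, c a (b + d) = c a b + c a d) :
    ∀ f g h : C →₀ RatFunc ℂ,
      harmMul N P C E c (harmMul N P C E c f g) h =
        harmMul N P C E c f (harmMul N P C E c g h) :=
  stmt_18_general N P Pplus hpointed C E hEsub c hcl hcr
end
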